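/- arXiv:2006.05762 — 3 statements merged into one kernel-verified Lean document; each statement's English description precedes it below -/
import Mathlib

section
/- Let Ω ⊂ ℝ^d be open and bounded, z ∈ E(Ω), and w ∈ ℂ^d with Im(w) = t·Im(z) for some t ∈ [0,1] and dist(Re(w), Ωᶜ) + ε₁ < |Im(w)|. Then |Im(z) − Im(w)| ≤ |Re(z) − Re(w)| − ε₁. -/
open Complex Metric

/-- The real part of a point of `ℂ^d`, as a point of `ℝ^d`. -/
noncomputable def rePart {d : ℕ} (z : EuclideanSpace ℂ (Fin d)) :
    EuclideanSpace ℝ (Fin d) := WithLp.toLp 2 (fun j => (z j).re)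

/-- The imaginary part of a point of `ℂ^d`, as a point of `ℝ^d`. -/
noncomputable def imPart {d : ℕ} (z : EuclideanSpace ℂ (Fin d)) :
    EuclideanSpace ℝ (Fin d) := WithLp.toLp 2 (fun j => (z j).im)

/-- The set `E(Ω) = {z = x + iy : x ∈ Ω, |y| < dist(x, ∂Ω)}`. -/
noncomputable def ESet {d : ℕ} (Ω : Set (EuclideanSpace ℝ (Fin d))) :
    Set (EuclideanSpace ℂ (Fin d)) :=
  {z | rePart z ∈ Ω ∧ ‖imPart z‖ < infDist (rePart z) (frontier Ω)}

/-
Since `Im w` lies on the segment from `0` to `Im z`, `|Im z - Im w| = |Im z| - |Im w|`.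
For `x ∈ Ω` the distances from `x` to `∂Ω` and to `Ωᶜ` agree, so, by the triangle inequality,
`|Im z| < dist(Re z, Ωᶜ) ≤ dist(Re w, Ωᶜ) + |Re z - Re w| < |Im w| - ε₁ + |Re z - Re w|`.
-/

theorem norm_sub_smul_self {E : Type*} [SeminormedAddCommGroup E] [NormedSpace ℝ E]
    (v : E) {t : ℝ} (ht0 : 0 ≤ t) (ht1 : t ≤ 1) : ‖v - t • v‖ = ‖v‖ - ‖t • v‖ := by
  have h : v - t • v = (1 - t) • v := by rw [sub_smul, one_smul]
  rw [h, norm_smul, norm_smul, Real.norm_of_nonneg ht0,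
    Real.norm_of_nonneg (sub_nonneg.mpr ht1)]
  ring

theorem infDist_frontier_le_infDist_compl {E : Type*} [NormedAddCommGroup E] [NormedSpace ℝ E]
    [FiniteDimensional ℝ E] {s : Set E} {x : E} (hx : x ∈ s) :
    infDist x (frontier s) ≤ infDist x sᶜ := by
  rcases eq_or_ne s Set.univ with rfl | hs
  · simp
  obtain ⟨y, hy, hxy⟩ := exists_mem_frontier_infDist_compl_eq_dist hx hs
  exact hxy ▸ infDist_le_dist_of_mem hy

theorem norm_imPart_lt_infDist_compl {d : ℕ} {Ω : Set (EuclideanSpace ℝ (Fin d))}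
    {z : EuclideanSpace ℂ (Fin d)} (hz : z ∈ ESet Ω) :
    ‖imPart z‖ < infDist (rePart z) Ωᶜ :=
  hz.2.trans_le (infDist_frontier_le_infDist_compl hz.1)

theorem stmt7_general {d : ℕ} (Ω : Set (EuclideanSpace ℝ (Fin d)))
    (z w : EuclideanSpace ℂ (Fin d)) (ε₁ : ℝ)
    (hz : z ∈ ESet Ω)
    (t : ℝ) (ht0 : 0 ≤ t) (ht1 : t ≤ 1) (htw : imPart w = t • imPart z)
    (hw : infDist (rePart w) Ωᶜ + ε₁ < ‖imPart w‖) :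
    ‖imPart z - imPart w‖ ≤ ‖rePart z - rePart w‖ - ε₁ := by
  have him : ‖imPart z - imPart w‖ = ‖imPart z‖ - ‖imPart w‖ := by
    rw [htw]
    exact norm_sub_smul_self _ ht0 ht1
  have hre : infDist (rePart z) Ωᶜ ≤ infDist (rePart w) Ωᶜ + ‖rePart z - rePart w‖ :=
    dist_eq_norm (rePart z) (rePart w) ▸ infDist_le_infDist_add_dist
  linarith [norm_imPart_lt_infDist_compl hz]

theorem stmt7 {d : ℕ} (Ω : Set (EuclideanSpace ℝ (Fin d)))
    (hΩopen : IsOpen Ω) (hΩbdd : Bornology.IsBounded Ω)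
    (z w : EuclideanSpace ℂ (Fin d)) (ε₁ : ℝ)
    (hz : z ∈ ESet Ω)
    (t : ℝ) (ht0 : 0 ≤ t) (ht1 : t ≤ 1) (htw : imPart w = t • imPart z)
    (hw : infDist (rePart w) Ωᶜ + ε₁ < ‖imPart w‖) :
    ‖imPart z - imPart w‖ ≤ ‖rePart z - rePart w‖ - ε₁ :=
  stmt7_general Ω z w ε₁ hz t ht0 ht1 htw hw
end

section
/- Let g ∈ L²(ℝ^d) with Fourier transform ĝ, and define u on ℝ × ℝ^d by its space-time Fourier transform û(τ, ξ) = 2ξ²/(ξ⁴ + τ²) · ĝ(ξ), where ξ² = |ξ|². If ĝ(ξ) = O(|ξ|²) near ξ = 0 and ĝ is bounded with compact support (or more generally (1+|ξ|)³ĝ ∈ L²), then (1+|ξ|)·û ∈ L²(ℝ^{1+d}) and (1+|τ|)^{1/2}·û ∈ L²(ℝ^{1+d}); hence u ∈ H^{1,1/2}(ℝ × ℝ^d) = L²(ℝ_t; H¹(ℝ^d)) ∩ H^{1/2}(ℝ_t; L²(ℝ^d)). -/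
/-!
The `τ`-integral of the kernel is explicit, `∫ (|ξ|⁴ + τ²)⁻¹ dτ = π / |ξ|²`, and both weights
satisfy `w² m² ≲ (1 + |ξ|²) / (|ξ|⁴ + τ²)` for the multiplier `m = 2|ξ|² / (|ξ|⁴ + τ²)` (for
`w = √(1 + |τ|)` this is AM-GM, `|τ| |ξ|² ≤ (|ξ|⁴ + τ²) / 2`). By Tonelli the squared `L²` norms
are therefore bounded by `∫ (1 + |ξ|²) |ĝ|² / |ξ|² dξ`, which is finite: near `0` the vanishing
`ĝ = O(|ξ|²)` cancels the singularity, and away from `0` the weight is dominated by `(1 + |ξ|)⁶`.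
-/

open MeasureTheory Real

lemma inv_sq_add_sq_eq {a : ℝ} (ha : a ≠ 0) (τ : ℝ) :
    (a ^ 2 + τ ^ 2)⁻¹ = a⁻¹ ^ 2 * (1 + (a⁻¹ * τ) ^ 2)⁻¹ := by
  field_simp

lemma integrable_inv_sq_add_sq {a : ℝ} (ha : a ≠ 0) :
    Integrable fun τ : ℝ => (a ^ 2 + τ ^ 2)⁻¹ := by
  simp_rw [inv_sq_add_sq_eq ha]
  exact (integrable_inv_one_add_sq.comp_mul_left' (inv_ne_zero ha)).const_mul _

lemma integral_univ_inv_sq_add_sq {a : ℝ} (ha : a ≠ 0) :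
    ∫ τ : ℝ, (a ^ 2 + τ ^ 2)⁻¹ = π / |a| := by
  simp_rw [inv_sq_add_sq_eq ha]
  rw [integral_const_mul, Measure.integral_comp_inv_mul_left (fun y : ℝ => (1 + y ^ 2)⁻¹) a,
    integral_univ_inv_one_add_sq, smul_eq_mul, inv_pow, ← sq_abs a]
  field_simp

lemma memLp_two_of_sq_norm_le_inv_sq_add_sq {E G : Type*} [MeasureSpace E]
    [SFinite (volume : Measure E)] [NormedAddCommGroup G] {f : ℝ × E → G}
    (hf : AEStronglyMeasurable f volume) {a c : E → ℝ} (hf0 : ∀ τ ξ, a ξ = 0 → f (τ, ξ) = 0)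
    (hfc : ∀ τ ξ, ‖f (τ, ξ)‖ ^ 2 ≤ c ξ * (a ξ ^ 2 + τ ^ 2)⁻¹)
    (hc : Integrable fun ξ => c ξ / |a ξ|) : MemLp f 2 volume := by
  have hf2 : AEStronglyMeasurable (fun p => ‖f p‖ ^ 2) (volume.prod volume) := hf.norm.pow 2
  rw [memLp_two_iff_integrable_sq_norm hf, Measure.volume_eq_prod, integrable_prod_iff' hf2]
  have hfm : ∀ᵐ ξ, AEStronglyMeasurable (fun τ => ‖f (τ, ξ)‖ ^ 2) volume :=
    hf2.prodMk_right
  have hfiber : ∀ ξ, a ξ ≠ 0 → AEStronglyMeasurable (fun τ => ‖f (τ, ξ)‖ ^ 2) volume →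
      Integrable (fun τ => ‖f (τ, ξ)‖ ^ 2) ∧ ∫ τ, ‖f (τ, ξ)‖ ^ 2 ≤ π * (c ξ / |a ξ|) := by
    intro ξ ha hξ
    have hdom := (integrable_inv_sq_add_sq ha).const_mul (c ξ)
    have hint : Integrable fun τ => ‖f (τ, ξ)‖ ^ 2 :=
      hdom.mono' hξ (.of_forall fun τ => by simpa using hfc τ ξ)
    refine ⟨hint, ?_⟩
    calc ∫ τ, ‖f (τ, ξ)‖ ^ 2 ≤ ∫ τ, c ξ * (a ξ ^ 2 + τ ^ 2)⁻¹ :=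
          integral_mono hint hdom (hfc · ξ)
      _ = π * (c ξ / |a ξ|) := by
          rw [integral_const_mul, integral_univ_inv_sq_add_sq ha]; ring
  constructor
  · filter_upwards [hfm] with ξ hξ
    by_cases ha : a ξ = 0
    · simp [hf0 _ _ ha]
    · exact (hfiber ξ ha hξ).1
  · refine (hc.const_mul π).mono' hf2.prod_swap.norm.integral_prod_right' ?_
    filter_upwards [hfm] with ξ hξ
    by_cases ha : a ξ = 0
    · simp [hf0 _ _ ha, ha]
    · simp only [norm_pow, norm_norm]
      rw [Real.norm_of_nonneg (integral_nonneg fun _ => by positivity)]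
      exact (hfiber ξ ha hξ).2

lemma one_add_sq_mul_sq_div_sq_le_of_le_one {x y C : ℝ} (hx : 0 ≤ x) (hx1 : x ≤ 1) (hy : 0 ≤ y)
    (hyC : y ≤ C * x ^ 2) : (1 + x ^ 2) * y ^ 2 / x ^ 2 ≤ 2 * C ^ 2 := by
  rcases hx.eq_or_lt with rfl | hx0
  · simpa using mul_nonneg zero_le_two (sq_nonneg C)
  have hy2 : y ^ 2 ≤ C ^ 2 * x ^ 4 := by nlinarith
  rw [div_le_iff₀ (by positivity)]
  have hx2 : x ^ 2 ≤ 1 := by nlinarith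
  nlinarith [mul_le_mul_of_nonneg_left hy2 (by positivity : (0:ℝ) ≤ 1 + x ^ 2), sq_nonneg C,
    mul_nonneg (sq_nonneg C) (sq_nonneg x)]

lemma one_add_sq_mul_sq_div_sq_le_of_one_le {x y : ℝ} (hx : 1 ≤ x) :
    (1 + x ^ 2) * y ^ 2 / x ^ 2 ≤ ((1 + x) ^ 3 * y) ^ 2 := by
  have h2 : (1 + x ^ 2) / x ^ 2 ≤ ((1 + x) ^ 3) ^ 2 := by
    rw [div_le_iff₀ (by positivity)]
    nlinarith [pow_le_pow_left₀ (by norm_num : (0:ℝ) ≤ 2) (by linarith : 2 ≤ 1 + x) 6]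
  rw [mul_div_right_comm, mul_pow]
  exact mul_le_mul_of_nonneg_right h2 (sq_nonneg y)

lemma integrable_one_add_sq_norm_mul_sq_norm_div_sq_norm {E G : Type*} [NormedAddCommGroup E]
    [MeasurableSpace E] [OpensMeasurableSpace E] [ProperSpace E] {μ : Measure E}
    [IsFiniteMeasureOnCompacts μ] [NormedAddCommGroup G] [NormedSpace ℝ G] {g : E → G}
    (hg_meas : AEStronglyMeasurable g μ) (hg : MemLp (fun ξ => ((1 + ‖ξ‖) ^ 3 : ℝ) • g ξ) 2 μ)
    {C : ℝ} (hvanish : ∀ ξ, ‖ξ‖ ≤ 1 → ‖g ξ‖ ≤ C * ‖ξ‖ ^ 2) :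
    Integrable (fun ξ => (1 + ‖ξ‖ ^ 2) * ‖g ξ‖ ^ 2 / ‖ξ‖ ^ 2) μ := by
  have hball : Integrable ((Metric.closedBall (0 : E) 1).indicator fun _ => 2 * C ^ 2) μ :=
    (integrableOn_const measure_closedBall_lt_top.ne).integrable_indicator measurableSet_closedBall
  have hhigh := (memLp_two_iff_integrable_sq_norm hg.1).1 hg
  have hmeas : AEStronglyMeasurable (fun ξ => (1 + ‖ξ‖ ^ 2) * ‖g ξ‖ ^ 2 / ‖ξ‖ ^ 2) μ := by
    simp only [div_eq_mul_inv]
    exact ((by fun_prop : Continuous fun ξ : E => 1 + ‖ξ‖ ^ 2).aestronglyMeasurable.mul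
      (hg_meas.norm.pow 2)).mul (measurable_norm.pow_const 2).inv.aestronglyMeasurable
  refine (hball.add hhigh).mono' hmeas (.of_forall fun ξ => ?_)
  rw [Real.norm_of_nonneg (by positivity), Pi.add_apply, norm_smul,
    Real.norm_of_nonneg (by positivity)]
  rcases le_or_gt ‖ξ‖ 1 with h | h
  · rw [Set.indicator_of_mem (by simpa using h)]
    have := one_add_sq_mul_sq_div_sq_le_of_le_one (norm_nonneg ξ) h (norm_nonneg _) (hvanish ξ h)
    nlinarith
  · rw [Set.indicator_of_notMem (by simpa using h), zero_add]
    exact one_add_sq_mul_sq_div_sq_le_of_one_le h.le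

lemma sq_one_add_mul_symbol_le (τ x : ℝ) :
    ((1 + x) * (2 * x ^ 2 / (x ^ 4 + τ ^ 2))) ^ 2 ≤ 8 * (1 + x ^ 2) * ((x ^ 2) ^ 2 + τ ^ 2)⁻¹ := by
  rcases eq_or_ne x 0 with rfl | hx
  · simpa using sq_nonneg τ
  have hD : 0 < x ^ 4 + τ ^ 2 := by positivity
  rw [← pow_mul, ← div_eq_mul_inv, mul_div_assoc', div_pow, div_le_div_iff₀ (by positivity) hD]
  nlinarith [mul_nonneg hD.le (sq_nonneg τ), mul_nonneg hD.le (sq_nonneg (τ * x)),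
    mul_nonneg hD.le (sq_nonneg (x ^ 2 * (1 - x)))]

lemma sq_sqrt_one_add_abs_mul_symbol_le (τ x : ℝ) :
    (√(1 + |τ|) * (2 * x ^ 2 / (x ^ 4 + τ ^ 2))) ^ 2
      ≤ 4 * (1 + x ^ 2) * ((x ^ 2) ^ 2 + τ ^ 2)⁻¹ := by
  rcases eq_or_ne x 0 with rfl | hx
  · simpa using sq_nonneg τ
  rw [mul_pow, sq_sqrt (by positivity), ← sq_abs τ]
  set t := |τ|
  have ht0 : 0 ≤ t := abs_nonneg τ
  have hD : 0 < x ^ 4 + t ^ 2 := by positivity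
  rw [← pow_mul, ← div_eq_mul_inv, div_pow, mul_div_assoc', div_le_div_iff₀ (by positivity) hD]
  nlinarith [mul_nonneg hD.le (sq_nonneg t), mul_nonneg hD.le (sq_nonneg (x * (x ^ 2 - t))),
    mul_nonneg (mul_nonneg hD.le (pow_nonneg (sq_nonneg x) 2)) ht0]

lemma memLp_two_weight_smul_symbol_smul {E : Type*} [NormedAddCommGroup E] [MeasureSpace E]
    [BorelSpace E] [ProperSpace E] [IsFiniteMeasureOnCompacts (volume : Measure E)]
    [SFinite (volume : Measure E)] {g : E → ℂ} (hg_meas : Measurable g)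
    (hg : MemLp (fun ξ => ((1 + ‖ξ‖) ^ 3 : ℝ) • g ξ) 2 volume) {C : ℝ}
    (hvanish : ∀ ξ, ‖ξ‖ ≤ 1 → ‖g ξ‖ ≤ C * ‖ξ‖ ^ 2) (W : ℝ → ℝ → ℝ)
    (hW : Measurable (Function.uncurry W)) {K : ℝ}
    (hWK : ∀ τ x, (W τ x * (2 * x ^ 2 / (x ^ 4 + τ ^ 2))) ^ 2
      ≤ K * (1 + x ^ 2) * ((x ^ 2) ^ 2 + τ ^ 2)⁻¹) :
    MemLp (fun p : ℝ × E => W p.1 ‖p.2‖ • ((2 * ‖p.2‖ ^ 2 / (‖p.2‖ ^ 4 + p.1 ^ 2) : ℝ) • g p.2))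
      2 volume := by
  refine memLp_two_of_sq_norm_le_inv_sq_add_sq (a := fun ξ => ‖ξ‖ ^ 2)
    (c := fun ξ => K * (1 + ‖ξ‖ ^ 2) * ‖g ξ‖ ^ 2) ?_ (fun τ ξ h => by simp_all) (fun τ ξ => ?_) ?_
  · exact ((hW.comp (measurable_fst.prodMk measurable_snd.norm)).smul
      ((by fun_prop : Measurable fun p : ℝ × E => 2 * ‖p.2‖ ^ 2 / (‖p.2‖ ^ 4 + p.1 ^ 2)).smul
        (hg_meas.comp measurable_snd))).aestronglyMeasurable
  · have h := mul_le_mul_of_nonneg_right (hWK τ ‖ξ‖) (sq_nonneg ‖g ξ‖)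
    simp only [norm_smul, Real.norm_eq_abs, mul_pow, sq_abs] at h ⊢
    linarith
  · simpa [mul_div_assoc, mul_assoc] using
      (integrable_one_add_sq_norm_mul_sq_norm_div_sq_norm hg_meas.aestronglyMeasurable hg
        hvanish).const_mul K

theorem stmt10_general {d : ℕ} (ghat : EuclideanSpace ℝ (Fin d) → ℂ)
    (hmeas : Measurable ghat)
    (hg : MemLp (fun ξ => ((1 + ‖ξ‖) ^ 3 : ℝ) • ghat ξ) 2 volume)
    (hvanish : ∃ C : ℝ, ∀ ξ : EuclideanSpace ℝ (Fin d), ‖ξ‖ ≤ 1 → ‖ghat ξ‖ ≤ C * ‖ξ‖ ^ 2) :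
    MemLp
      (fun p : ℝ × EuclideanSpace ℝ (Fin d) =>
        ((1 + ‖p.2‖ : ℝ)) • ((2 * ‖p.2‖ ^ 2 / (‖p.2‖ ^ 4 + p.1 ^ 2) : ℝ) • ghat p.2))
      2 volume ∧
    MemLp
      (fun p : ℝ × EuclideanSpace ℝ (Fin d) =>
        (Real.sqrt (1 + |p.1|)) • ((2 * ‖p.2‖ ^ 2 / (‖p.2‖ ^ 4 + p.1 ^ 2) : ℝ) • ghat p.2))
      2 volume := by
  obtain ⟨C, hC⟩ := hvanish
  exact ⟨memLp_two_weight_smul_symbol_smul hmeas hg hC (fun _ x => 1 + x) (by fun_prop)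
      sq_one_add_mul_symbol_le,
    memLp_two_weight_smul_symbol_smul hmeas hg hC (fun τ _ => √(1 + |τ|)) (by fun_prop)
      sq_sqrt_one_add_abs_mul_symbol_le⟩

/-- Multiplier estimate for `û(τ,ξ) = 2ξ²/(ξ⁴+τ²) ĝ(ξ)`: membership in the anisotropic
space `H^{1,1/2}(ℝ × ℝ^d)`, expressed via weighted `L²` bounds on the Fourier side. -/
theorem stmt10 {d : ℕ} (hd : 1 ≤ d) (ghat : EuclideanSpace ℝ (Fin d) → ℂ)
    (hmeas : Measurable ghat)
    (hg : MemLp (fun ξ => ((1 + ‖ξ‖) ^ 3 : ℝ) • ghat ξ) 2 volume)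
    (hvanish : ∃ C : ℝ, ∀ ξ : EuclideanSpace ℝ (Fin d), ‖ξ‖ ≤ 1 → ‖ghat ξ‖ ≤ C * ‖ξ‖ ^ 2) :
    MemLp
      (fun p : ℝ × EuclideanSpace ℝ (Fin d) =>
        ((1 + ‖p.2‖ : ℝ)) • ((2 * ‖p.2‖ ^ 2 / (‖p.2‖ ^ 4 + p.1 ^ 2) : ℝ) • ghat p.2))
      2 volume ∧
    MemLp
      (fun p : ℝ × EuclideanSpace ℝ (Fin d) =>
        (Real.sqrt (1 + |p.1|)) • ((2 * ‖p.2‖ ^ 2 / (‖p.2‖ ^ 4 + p.1 ^ 2) : ℝ) • ghat p.2))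
      2 volume :=
  stmt10_general ghat hmeas hg hvanish
end

section
/- The exponential integral E₁(z) = ∫₁^∞ e^{−zt}/t dt satisfies, for Re(z) > 0, E₁(z) = −γ − log(z) − Σ_{k=1}^∞ (−z)^k/(k·k!), where γ is the Euler–Mascheroni constant and log is the principal branch; in particular E₁(z) + log(z) extends to an entire function of z. -/
/-!
On the half-plane `0 < re z`, both `E₁ z + log z` and the entire function
`Ein z = ∫₀¹ (1 - e^{-zu}) / u du` have derivative `(1 - e^{-z}) / z`, so `E₁ - Ein + log` is
constant there. At `z = 1`, integrating `log t · e^{-t}` by parts on `(0, 1]` and on `[1, ∞)` gives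
`Ein 1 - E₁ 1 = -∫₀^∞ log t · e^{-t} dt = -Γ'(1) = γ`. Integrating the exponential series
termwise, `Ein z = -∑_{k ≥ 1} (-z)^k / (k · k!)`.
-/

open MeasureTheory Complex Set Filter Topology
open scoped Nat

local notation "γ" => Real.eulerMascheroniConstant

theorem Differentiable.continuous_dslope {𝕜 E : Type*} [NontriviallyNormedField 𝕜]
    [NormedAddCommGroup E] [NormedSpace 𝕜 E] {f : 𝕜 → E} (hf : Differentiable 𝕜 f)
    (a : 𝕜) : Continuous (dslope f a) :=
  continuous_iff_continuousAt.2 fun b => by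
    rcases eq_or_ne b a with rfl | hb
    · exact continuousAt_dslope_same.2 (hf b)
    · exact (continuousAt_dslope_of_ne hb).2 (hf b).continuousAt

theorem Differentiable.intervalIntegrable_inv_smul_sub {E : Type*} [NormedAddCommGroup E]
    [NormedSpace ℝ E] {f : ℝ → E} (hf : Differentiable ℝ f) (a b : ℝ) :
    IntervalIntegrable (fun u => u⁻¹ • (f u - f 0)) volume a b := by
  refine ((hf.continuous_dslope 0).intervalIntegrable a b).congr_ae ?_
  filter_upwards [ae_restrict_of_ae (Measure.ae_ne volume 0)] with u hu
  rw [dslope_of_ne f hu, slope_def_module, sub_zero]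

noncomputable section

namespace ExpIntegral

def E₁ (z : ℂ) : ℂ := ∫ t in Ioi (1 : ℝ), cexp (-z * t) / t

def Ein (z : ℂ) : ℂ := ∫ u in (0 : ℝ)..1, (1 - cexp (-z * u)) / u

theorem norm_cexp_neg_mul_ofReal (z : ℂ) (t : ℝ) : ‖cexp (-z * t)‖ = Real.exp (-z.re * t) := by
  simp [Complex.norm_exp]

theorem hasDerivAt_cexp_neg_mul_div {t : ℝ} (ht : t ≠ 0) (w : ℂ) :
    HasDerivAt (fun w : ℂ => cexp (-w * t) / t) (-cexp (-w * t)) w := by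
  refine (((hasDerivAt_neg w).mul_const (t : ℂ)).cexp.div_const (t : ℂ)).congr_deriv ?_
  field_simp [ofReal_ne_zero.2 ht]

theorem integrableOn_E₁_integrand {z : ℂ} (hz : 0 < z.re) :
    IntegrableOn (fun t : ℝ => cexp (-z * t) / t) (Ioi 1) := by
  refine Integrable.mono (integrableOn_exp_mul_complex_Ioi (a := -z) (by simpa using hz) 1)
    (by fun_prop : Measurable _).aestronglyMeasurable ?_
  filter_upwards [ae_restrict_mem measurableSet_Ioi] with t (ht : 1 < t)
  rw [norm_div, norm_real, Real.norm_of_nonneg (by linarith)]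
  exact div_le_self (norm_nonneg _) ht.le

theorem hasDerivAt_E₁ {z : ℂ} (hz : 0 < z.re) : HasDerivAt E₁ (-cexp (-z) / z) z := by
  obtain ⟨ε, hε, hεz⟩ : ∃ ε, 0 < ε ∧ 2 * ε = z.re := ⟨z.re / 2, half_pos hz, by ring⟩
  have hre (w : ℂ) (hw : w ∈ Metric.ball z ε) : ε ≤ w.re := by
    have := (abs_re_le_norm (w - z)).trans_lt (mem_ball_iff_norm.1 hw)
    rw [sub_re, abs_lt] at this
    linarith
  have key := hasDerivAt_integral_of_dominated_loc_of_deriv_le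
    (F := fun w (t : ℝ) => cexp (-w * t) / t) (F' := fun w t => -cexp (-w * t))
    (bound := fun t => Real.exp (-ε * t)) (Metric.ball_mem_nhds z hε)
    (.of_forall fun w => (by fun_prop : Measurable _).aestronglyMeasurable)
    (integrableOn_E₁_integrand hz) (by fun_prop) ?_ (exp_neg_integrableOn_Ioi 1 hε) ?_
  · rw [integral_neg, integral_exp_mul_complex_Ioi (by simpa using hz)] at key
    exact key.2.congr_deriv (by simp [neg_div, div_neg])
  · filter_upwards [ae_restrict_mem measurableSet_Ioi] with t (ht : 1 < t) w hw
    rw [norm_neg, norm_cexp_neg_mul_ofReal]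
    gcongr
    nlinarith [hre w hw]
  · filter_upwards [ae_restrict_mem measurableSet_Ioi] with t (ht : 1 < t) w _
    exact hasDerivAt_cexp_neg_mul_div (by positivity) w

theorem intervalIntegrable_Ein_integrand (z : ℂ) :
    IntervalIntegrable (fun u : ℝ => (1 - cexp (-z * u)) / u) volume 0 1 := by
  have hf : Differentiable ℝ fun u : ℝ => -cexp (-z * u) := by fun_prop
  refine (hf.intervalIntegrable_inv_smul_sub 0 1).congr_ae (.of_forall fun u => ?_)
  simp [div_eq_inv_mul, mul_sub, neg_add_eq_sub]

theorem hasDerivAt_Ein (z : ℂ) : HasDerivAt Ein (∫ u in (0 : ℝ)..1, cexp (-z * u)) z := by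
  refine (intervalIntegral.hasDerivAt_integral_of_dominated_loc_of_deriv_le
    (F := fun w (u : ℝ) => (1 - cexp (-w * u)) / u) (F' := fun w u => cexp (-w * u))
    (bound := fun _ => Real.exp (‖z‖ + 1)) (Metric.ball_mem_nhds z one_pos)
    (.of_forall fun w => (by fun_prop : Measurable _).aestronglyMeasurable)
    (intervalIntegrable_Ein_integrand z) (by fun_prop) ?_ intervalIntegrable_const ?_).2
  · refine .of_forall fun u hu w hw => ?_
    rw [uIoc_of_le zero_le_one] at hu
    rw [norm_cexp_neg_mul_ofReal, Real.exp_le_exp]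
    have hwz : ‖w‖ < ‖z‖ + 1 := by
      have := norm_le_norm_add_norm_sub' w z
      rw [mem_ball_iff_norm] at hw
      linarith
    have hre : -‖w‖ ≤ w.re := neg_le_of_abs_le (abs_re_le_norm w)
    nlinarith [mul_nonneg (neg_le_iff_add_nonneg.1 hre) hu.1.le,
      mul_nonneg (norm_nonneg w) (sub_nonneg.2 hu.2)]
  · refine .of_forall fun u hu w _ => ?_
    rw [uIoc_of_le zero_le_one] at hu
    have := (hasDerivAt_cexp_neg_mul_div hu.1.ne' w).const_sub (1 / (u : ℂ))
    simpa [sub_div] using this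

theorem integral_cexp_neg_mul {z : ℂ} (hz : z ≠ 0) :
    ∫ u in (0 : ℝ)..1, cexp (-z * u) = (1 - cexp (-z)) / z := by
  rw [integral_exp_mul_complex (neg_ne_zero.2 hz)]
  field_simp
  simp

theorem integral_log_mul_exp_neg :
    ∫ t in Ioi (0 : ℝ), Real.log t * Real.exp (-t) = -γ := by
  have h_one : (0 : ℝ) < (1 : ℂ).re := by simp
  have hΓ : Gamma =ᶠ[𝓝 1] GammaIntegral := by
    filter_upwards [(isOpen_lt continuous_const continuous_re).mem_nhds h_one]
      with s hs using Gamma_eq_integral hs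
  have h := ((hasDerivAt_GammaIntegral h_one).congr_of_eventuallyEq hΓ).unique
    hasDerivAt_Gamma_one
  simp only [sub_self, cpow_zero, one_mul, ← ofReal_mul] at h
  exact_mod_cast h

-- The Bochner integral of a non-integrable function is `0`, and `γ ≠ 0`.
theorem integrableOn_log_mul_exp_neg :
    IntegrableOn (fun t => Real.log t * Real.exp (-t)) (Ioi 0) :=
  Integrable.of_integral_ne_zero <| by
    rw [integral_log_mul_exp_neg, neg_ne_zero]
    exact (Real.one_half_lt_eulerMascheroniConstant.trans' (by norm_num)).ne'

theorem integral_Ioi_one_log_mul_exp_neg :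
    ∫ t in Ioi (1 : ℝ), Real.log t * Real.exp (-t) = ∫ t in Ioi (1 : ℝ), Real.exp (-t) / t := by
  have h_int : IntegrableOn (fun t : ℝ => t⁻¹ * -Real.exp (-t)) (Ioi 1) := by
    have hexp : IntegrableOn (fun t : ℝ => Real.exp (-t)) (Ioi 1) := by
      simpa using exp_neg_integrableOn_Ioi 1 one_pos
    refine Integrable.mono hexp
      (by fun_prop : Measurable fun t : ℝ => t⁻¹ * -Real.exp (-t)).aestronglyMeasurable ?_
    filter_upwards [ae_restrict_mem measurableSet_Ioi] with t (ht : 1 < t)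
    rw [norm_mul, norm_inv, norm_neg, Real.norm_of_nonneg (by linarith : (0 : ℝ) ≤ t)]
    exact mul_le_of_le_one_left (norm_nonneg _) (inv_le_one_of_one_le₀ ht.le)
  have h_one : Tendsto (Real.log * fun t => -Real.exp (-t)) (𝓝[>] 1) (𝓝 0) := by
    have : ContinuousAt (Real.log * fun t => -Real.exp (-t)) 1 :=
      (Real.continuousAt_log one_ne_zero).mul (by fun_prop)
    simpa using this.tendsto.mono_left nhdsWithin_le_nhds
  have h_top : Tendsto (Real.log * fun t => -Real.exp (-t)) atTop (𝓝 0) := by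
    refine squeeze_zero_norm' ?_ (by simpa using Real.tendsto_pow_mul_exp_neg_atTop_nhds_zero 1)
    filter_upwards [eventually_ge_atTop 1] with t ht
    rw [Pi.mul_apply, norm_mul, norm_neg, Real.norm_of_nonneg (Real.log_nonneg ht),
      Real.norm_of_nonneg (Real.exp_nonneg _)]
    gcongr
    exact Real.log_le_self (by linarith)
  have := integral_Ioi_mul_deriv_eq_deriv_mul
    (fun t (ht : 1 < t) => Real.hasDerivAt_log (by positivity))
    (fun t _ => (hasDerivAt_neg t).exp.fun_neg.congr_deriv (by ring))
    (integrableOn_log_mul_exp_neg.mono_set (Ioi_subset_Ioi zero_le_one)) h_int h_one h_top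
  simpa [div_eq_inv_mul, integral_neg] using this

theorem integral_zero_one_log_mul_exp_neg :
    ∫ t in (0 : ℝ)..1, Real.log t * Real.exp (-t) =
      -∫ t in (0 : ℝ)..1, (1 - Real.exp (-t)) / t := by
  set g : ℝ → ℝ := fun t => 1 - Real.exp (-t)
  have hg : Differentiable ℝ g := by fun_prop
  have hG : Continuous fun t => g t * Real.log t := by
    have h : (fun t => g t * Real.log t) = fun t => dslope g 0 t * (t * Real.log t) := by
      funext t
      have := sub_smul_dslope g 0 t
      rw [sub_zero, smul_eq_mul, show g 0 = 0 by simp [g], sub_zero] at this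
      rw [← this]
      ring
    rw [h]
    exact (hg.continuous_dslope 0).mul Real.continuous_mul_log
  have hG' (t : ℝ) (ht : t ∈ Ioo (0 : ℝ) 1) : HasDerivAt (fun t => g t * Real.log t)
      (Real.log t * Real.exp (-t) + (1 - Real.exp (-t)) / t) t :=
    (((hasDerivAt_neg t).exp.const_sub 1).mul (Real.hasDerivAt_log ht.1.ne')).congr_deriv
      (by ring)
  have h_log : IntervalIntegrable (fun t => Real.log t * Real.exp (-t)) volume 0 1 :=
    (intervalIntegrable_iff_integrableOn_Ioc_of_le zero_le_one).2
      (integrableOn_log_mul_exp_neg.mono_set Ioc_subset_Ioi_self)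
  have h_slope : IntervalIntegrable (fun t => (1 - Real.exp (-t)) / t) volume 0 1 := by
    simpa [div_eq_inv_mul, g] using hg.intervalIntegrable_inv_smul_sub 0 1
  have := intervalIntegral.integral_eq_sub_of_hasDeriv_right_of_le zero_le_one hG.continuousOn
    (fun t ht => (hG' t ht).hasDerivWithinAt) (h_log.add h_slope)
  rw [intervalIntegral.integral_add h_log h_slope] at this
  simp only [g, neg_zero, Real.exp_zero, sub_self, Real.log_zero, Real.log_one, mul_zero] at this
  linear_combination this

theorem Ein_one_sub_E₁_one : Ein 1 - E₁ 1 = γ := by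
  have h := intervalIntegral.integral_interval_add_Ioi integrableOn_log_mul_exp_neg
    (integrableOn_log_mul_exp_neg.mono_set (Ioi_subset_Ioi zero_le_one))
  rw [integral_log_mul_exp_neg, integral_zero_one_log_mul_exp_neg,
    integral_Ioi_one_log_mul_exp_neg] at h
  have hEin : Ein 1 = ↑(∫ u in (0 : ℝ)..1, (1 - Real.exp (-u)) / u) := by
    rw [Ein, ← intervalIntegral.integral_ofReal]
    simp
  have hE₁ : E₁ 1 = ↑(∫ t in Ioi (1 : ℝ), Real.exp (-t) / t) := by
    rw [E₁, ← integral_complex_ofReal]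
    simp
  rw [hEin, hE₁]
  exact_mod_cast (by linarith : _ = γ)

theorem E₁_eq_Ein_sub_log_sub {z : ℂ} (hz : 0 < z.re) : E₁ z = Ein z - log z - γ := by
  have hderiv (w : ℂ) (hw : 0 < w.re) : HasDerivAt (fun w => E₁ w - Ein w + log w) 0 w := by
    have hw0 : w ≠ 0 := fun h => by simp [h] at hw
    have := ((hasDerivAt_E₁ hw).sub (hasDerivAt_Ein w)).add (hasDerivAt_log (Or.inl hw))
    rw [integral_cexp_neg_mul hw0] at this
    exact this.congr_deriv (by field_simp; ring)
  have h_const := (isOpen_lt continuous_const continuous_re).is_const_of_deriv_eq_zero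
    (convex_halfSpace_re_gt 0).isPreconnected
    (fun w hw => (hderiv w hw).differentiableAt.differentiableWithinAt)
    (fun w hw => (hderiv w hw).deriv) (show z ∈ {w : ℂ | 0 < w.re} from hz)
    (show (1 : ℂ) ∈ {w : ℂ | 0 < w.re} by simp)
  simp only [log_one, add_zero] at h_const
  linear_combination h_const - Ein_one_sub_E₁_one

theorem hasSum_cexp_sub_one (w : ℂ) :
    HasSum (fun k : ℕ => w ^ (k + 1) / (k + 1)!) (cexp w - 1) := by
  have := NormedSpace.expSeries_div_hasSum_exp w
  rw [← Complex.exp_eq_exp_ℂ] at this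
  simpa using (hasSum_nat_add_iff' 1).2 this

theorem hasSum_neg_Ein (z : ℂ) :
    HasSum (fun k : ℕ => (-z) ^ (k + 1) / ((k + 1) * (k + 1)!)) (-Ein z) := by
  set F : ℕ → ℝ → ℂ := fun k u => (-z) ^ (k + 1) / (k + 1)! * (u : ℂ) ^ k
  have hF_integral (k : ℕ) :
      ∫ u in (0 : ℝ)..1, F k u = (-z) ^ (k + 1) / ((k + 1) * (k + 1)!) := by
    have h_pow : ∫ u in (0 : ℝ)..1, (u : ℂ) ^ k = 1 / (k + 1) := by
      simp_rw [← ofReal_pow]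
      rw [intervalIntegral.integral_ofReal, integral_pow]
      simp
    rw [intervalIntegral.integral_const_mul, h_pow]
    field_simp
  have hF_sum (u : ℝ) (hu : u ≠ 0) : HasSum (fun k => F k u) ((cexp (-z * u) - 1) / u) := by
    have h : (fun k => F k u) = fun k => (-z * u) ^ (k + 1) / (k + 1)! / u := by
      funext k
      field_simp [ofReal_ne_zero.2 hu]
      ring
    rw [h]
    exact (hasSum_cexp_sub_one (-z * u)).div_const (u : ℂ)
  have hF_le (k : ℕ) (u : ℝ) (hu : u ∈ Ioc (0 : ℝ) 1) :
      ‖F k u‖ ≤ ‖z‖ ^ (k + 1) / (k + 1)! := by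
    simp only [F, norm_mul, norm_div, norm_pow, norm_neg, norm_natCast, norm_real]
    exact mul_le_of_le_one_right (by positivity)
      (pow_le_one₀ (norm_nonneg _) ((Real.norm_of_nonneg hu.1.le).trans_le hu.2))
  have := intervalIntegral.hasSum_integral_of_dominated_convergence (a := 0) (b := 1)
    (μ := volume) (f := fun u : ℝ => (cexp (-z * u) - 1) / u)
    (fun k _ => ‖z‖ ^ (k + 1) / (k + 1)!)
    (fun k => (by fun_prop : Continuous (F k)).aestronglyMeasurable)
    (fun k => .of_forall fun u hu => hF_le k u (by simpa using hu))
    (.of_forall fun _ _ =>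
      (Real.summable_pow_div_factorial ‖z‖).comp_injective (add_left_injective 1))
    intervalIntegrable_const
    (.of_forall fun u hu => hF_sum u (by rw [uIoc_of_le zero_le_one] at hu; exact hu.1.ne'))
  have hEin : ∫ u in (0 : ℝ)..1, (cexp (-z * u) - 1) / u = -Ein z := by
    rw [Ein, ← intervalIntegral.integral_neg]
    simp only [← neg_div, neg_sub]
  simpa only [hF_integral, hEin] using this

end ExpIntegral

end

/-- The series expansion `E₁(z) = -γ - log z - ∑_{k≥1} (-z)^k/(k·k!)` for `Re z > 0`,
and the fact that `E₁(z) + log z` extends to an entire function. -/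
theorem stmt13 :
    (∀ z : ℂ, 0 < z.re →
      (∫ t in Set.Ioi (1 : ℝ), Complex.exp (-z * t) / t) =
        -(Real.eulerMascheroniConstant : ℂ) - Complex.log z -
          ∑' k : ℕ, (-z) ^ (k + 1) / ((k + 1) * (Nat.factorial (k + 1)))) ∧
    ∃ f : ℂ → ℂ, Differentiable ℂ f ∧ ∀ z : ℂ, 0 < z.re →
      f z = (∫ t in Set.Ioi (1 : ℝ), Complex.exp (-z * t) / t) + Complex.log z := by
  have hE₁ (z : ℂ) (hz : 0 < z.re) : (∫ t in Ioi (1 : ℝ), cexp (-z * t) / t) =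
      ExpIntegral.Ein z - log z - γ :=
    ExpIntegral.E₁_eq_Ein_sub_log_sub hz
  refine ⟨fun z hz => ?_, fun z => ExpIntegral.Ein z - γ,
    fun z => (ExpIntegral.hasDerivAt_Ein z).differentiableAt.sub_const _, fun z hz => ?_⟩
  · rw [hE₁ z hz, (ExpIntegral.hasSum_neg_Ein z).tsum_eq]
    ring
  · rw [hE₁ z hz]
    ring
end
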